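/- Let G be a connected graph on n vertices and α ∈ [0,1]. Then for every k with 1 ≤ k ≤ n, λ_k(RD(G)) ≤ λ_k(RD_α(G)) ≤ RTr_k, where RTr_k is the k-th largest reciprocal transmission among the vertices of G. -/

import Mathlib

/-
Write `L = RT(G) - RD(G)`. It is a Laplacian with the nonnegative weights `1 / d(u, v)`, so
`xᵀ L x = ½ ∑ᵤ ∑ᵥ (xᵤ - xᵥ)² / d(u, v) ≥ 0`. Since `RD_α(G) - RD(G) = α L` and
`RT(G) - RD_α(G) = (1 - α) L`, we get `RD(G) ≤ RD_α(G) ≤ RT(G)` in the Loewner order.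
Weyl's monotonicity theorem turns this into the same inequalities between the `k`-th largest
eigenvalues, and the eigenvalues of the diagonal matrix `RT(G)` are the reciprocal
transmissions. For Weyl's theorem, if `T ≤ S` then the span of the top `k` eigenvectors of `T`
and the span of the bottom `n - k + 1` eigenvectors of `S` meet in some `x ≠ 0`, and there
`λₖ(T) ‖x‖² ≤ ⟪T x, x⟫ ≤ ⟪S x, x⟫ ≤ λₖ(S) ‖x‖²`.
-/

open Matrix BigOperators Finset

/-- The reciprocal distance (Harary) matrix of a graph. -/
noncomputable def RDmat {V : Type*} [Fintype V] [DecidableEq V] (G : SimpleGraph V) :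
    Matrix V V ℝ :=
  Matrix.of fun i j => if i = j then 0 else (1 : ℝ) / (G.dist i j)

/-- The reciprocal transmission of a vertex. -/
noncomputable def RTr {V : Type*} [Fintype V] [DecidableEq V] (G : SimpleGraph V) (v : V) : ℝ :=
  ∑ u ∈ Finset.univ.erase v, (1 : ℝ) / (G.dist u v)

/-- The generalized reciprocal distance matrix `RD_α(G) = α RT(G) + (1-α) RD(G)`. -/
noncomputable def RDalpha {V : Type*} [Fintype V] [DecidableEq V] (G : SimpleGraph V) (α : ℝ) :
    Matrix V V ℝ :=
  α • Matrix.diagonal (RTr G) + (1 - α) • RDmat G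

/-- The `i`-th largest eigenvalue (1-indexed, with multiplicity) of a real matrix,
obtained from the roots of its characteristic polynomial sorted decreasingly. -/
noncomputable def eigDesc {V : Type*} [Fintype V] [DecidableEq V] (M : Matrix V V ℝ) (i : ℕ) : ℝ :=
  ((M.charpoly.roots.sort (· ≤ ·)).reverse).getD (i - 1) 0

/-- The spectral radius (largest eigenvalue) of a real symmetric matrix. -/
noncomputable def specRadius {V : Type*} [Fintype V] [DecidableEq V] (M : Matrix V V ℝ) : ℝ :=
  eigDesc M 1

/-- The join of two graphs. -/
def gjoin {V₁ V₂ : Type*} (G₁ : SimpleGraph V₁) (G₂ : SimpleGraph V₂) :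
    SimpleGraph (V₁ ⊕ V₂) where
  Adj x y := match x, y with
    | Sum.inl a, Sum.inl b => G₁.Adj a b
    | Sum.inr a, Sum.inr b => G₂.Adj a b
    | Sum.inl _, Sum.inr _ => True
    | Sum.inr _, Sum.inl _ => True
  symm := ⟨by rintro (a|a) (b|b) h <;> first | exact G₁.adj_symm h | exact G₂.adj_symm h | trivial⟩
  loopless := ⟨by rintro (a|a) h <;> first | exact G₁.irrefl h | exact G₂.irrefl h | exact G₁.loopless.irrefl a h | exact G₂.loopless.irrefl a h⟩


open Module Submodule

namespace OrthonormalBasis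
variable {ι 𝕜 E : Type*} [Fintype ι] [RCLike 𝕜] [NormedAddCommGroup E]
  [InnerProductSpace 𝕜 E]

lemma repr_apply_eq_zero_of_mem_span (b : OrthonormalBasis ι 𝕜 E) {s : Set ι} {x : E}
    (hx : x ∈ span 𝕜 (b '' s)) {i : ι} (hi : i ∉ s) : b.repr x i = 0 := by
  rw [← b.coe_toBasis, Basis.mem_span_image] at hx
  rw [← b.coe_toBasis_repr_apply]
  exact Finsupp.notMem_support_iff.mp fun h => hi (hx h)

lemma norm_sq_eq_sum_norm_sq_repr (b : OrthonormalBasis ι 𝕜 E) (x : E) :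
    ‖x‖ ^ 2 = ∑ i, ‖b.repr x i‖ ^ 2 := by
  rw [← b.repr.norm_map, EuclideanSpace.norm_sq_eq]

lemma finrank_span_image (b : OrthonormalBasis ι 𝕜 E) (s : Finset ι) :
    finrank 𝕜 (span 𝕜 (b '' s)) = s.card := by
  have hli : LinearIndependent 𝕜 (fun i : s => b i) :=
    b.orthonormal.linearIndependent.comp _ Subtype.val_injective
  rw [Set.image_eq_range]
  exact (finrank_span_eq_card hli).trans (Fintype.card_coe s)

end OrthonormalBasis

namespace LinearMap.IsSymmetric
variable {𝕜 E : Type*} [RCLike 𝕜] [NormedAddCommGroup E] [InnerProductSpace 𝕜 E]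
  [FiniteDimensional 𝕜 E] {T S : E →ₗ[𝕜] E} {n : ℕ} (hT : T.IsSymmetric)
  (hn : finrank 𝕜 E = n)

lemma re_inner_apply_self_eq_sum (x : E) :
    RCLike.re (inner 𝕜 (T x) x) =
      ∑ i, hT.eigenvalues hn i * ‖(hT.eigenvectorBasis hn).repr x i‖ ^ 2 := by
  rw [← (hT.eigenvectorBasis hn).repr.inner_map_map, PiLp.inner_apply, map_sum]
  refine Finset.sum_congr rfl fun i _ => ?_
  rw [eigenvectorBasis_apply_self_apply, RCLike.inner_apply, map_mul (starRingEnd 𝕜),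
    RCLike.conj_ofReal, mul_left_comm, RCLike.mul_conj, RCLike.re_ofReal_mul, ← RCLike.ofReal_pow,
    RCLike.ofReal_re]

lemma eigenvalues_mul_norm_sq_le_re_inner (i : Fin n) {x : E}
    (hx : x ∈ span 𝕜 (hT.eigenvectorBasis hn '' Set.Iic i)) :
    hT.eigenvalues hn i * ‖x‖ ^ 2 ≤ RCLike.re (inner 𝕜 (T x) x) := by
  rw [hT.re_inner_apply_self_eq_sum hn, (hT.eigenvectorBasis hn).norm_sq_eq_sum_norm_sq_repr,
    Finset.mul_sum]
  refine Finset.sum_le_sum fun j _ => ?_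
  by_cases hj : j ≤ i
  · exact mul_le_mul_of_nonneg_right (hT.eigenvalues_antitone hn hj) (by positivity)
  · simp [(hT.eigenvectorBasis hn).repr_apply_eq_zero_of_mem_span hx hj]

lemma re_inner_le_eigenvalues_mul_norm_sq (i : Fin n) {x : E}
    (hx : x ∈ span 𝕜 (hT.eigenvectorBasis hn '' Set.Ici i)) :
    RCLike.re (inner 𝕜 (T x) x) ≤ hT.eigenvalues hn i * ‖x‖ ^ 2 := by
  rw [hT.re_inner_apply_self_eq_sum hn, (hT.eigenvectorBasis hn).norm_sq_eq_sum_norm_sq_repr,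
    Finset.mul_sum]
  refine Finset.sum_le_sum fun j _ => ?_
  by_cases hj : i ≤ j
  · exact mul_le_mul_of_nonneg_right (hT.eigenvalues_antitone hn hj) (by positivity)
  · simp [(hT.eigenvectorBasis hn).repr_apply_eq_zero_of_mem_span hx hj]

/-- Weyl's monotonicity theorem. -/
theorem eigenvalues_le_eigenvalues_of_le (hS : S.IsSymmetric) (hTS : T ≤ S) (i : Fin n) :
    hT.eigenvalues hn i ≤ hS.eigenvalues hn i := by
  have hU : finrank 𝕜 (span 𝕜 (hT.eigenvectorBasis hn '' Set.Iic i)) = i + 1 := by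
    rw [← Finset.coe_Iic, OrthonormalBasis.finrank_span_image, Fin.card_Iic]
  have hW : finrank 𝕜 (span 𝕜 (hS.eigenvectorBasis hn '' Set.Ici i)) = n - i := by
    rw [← Finset.coe_Ici, OrthonormalBasis.finrank_span_image, Fin.card_Ici]
  set U := span 𝕜 (hT.eigenvectorBasis hn '' Set.Iic i)
  set W := span 𝕜 (hS.eigenvectorBasis hn '' Set.Ici i)
  have hUW : U ⊓ W ≠ ⊥ := by
    have := finrank_sup_add_finrank_inf_eq U W
    have := (U ⊔ W).finrank_le
    rw [Ne, ← finrank_eq_zero]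
    omega
  obtain ⟨x, ⟨hxU, hxW⟩, hx0⟩ := (Submodule.ne_bot_iff _).mp hUW
  have hTx := hT.eigenvalues_mul_norm_sq_le_re_inner hn i hxU
  have hSx := hS.re_inner_le_eigenvalues_mul_norm_sq hn i hxW
  have hTSx : RCLike.re (inner 𝕜 (T x) x) ≤ RCLike.re (inner 𝕜 (S x) x) := by
    simpa [inner_sub_left] using hTS.re_inner_nonneg_left x
  exact le_of_mul_le_mul_right (hTx.trans (hTSx.trans hSx)) (by positivity)

end LinearMap.IsSymmetric

namespace Matrix
variable {𝕜 n R : Type*} [RCLike 𝕜] [Fintype n] [DecidableEq n] {A B : Matrix n n 𝕜}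
open scoped MatrixOrder

lemma toEuclideanLin_le_toEuclideanLin (hAB : A ≤ B) : toEuclideanLin A ≤ toEuclideanLin B := by
  rw [LinearMap.le_def, ← map_sub, isPositive_toEuclideanLin_iff]
  exact hAB

lemma IsHermitian.eigenvalues₀_le_eigenvalues₀_of_le (hA : A.IsHermitian) (hB : B.IsHermitian)
    (hAB : A ≤ B) (i : Fin (Fintype.card n)) : hA.eigenvalues₀ i ≤ hB.eigenvalues₀ i :=
  LinearMap.IsSymmetric.eigenvalues_le_eigenvalues_of_le _ _ _
    (toEuclideanLin_le_toEuclideanLin hAB) i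

lemma dotProduct_mulVec_diagonal_sum_sub [CommRing R] {W : Matrix n n R} (hW : W.IsSymm)
    (x : n → R) :
    2 * (x ⬝ᵥ (((diagonal fun i => ∑ j, W i j) - W) *ᵥ x)) =
      ∑ i, ∑ j, W i j * (x i - x j) ^ 2 := by
  have hquad : x ⬝ᵥ (((diagonal fun i => ∑ j, W i j) - W) *ᵥ x) =
      ∑ i, ∑ j, W i j * (x i ^ 2 - x i * x j) := by
    rw [sub_mulVec, dotProduct_sub]
    simp only [dotProduct, mulVec_diagonal]
    simp only [mulVec, dotProduct, Finset.mul_sum, Finset.sum_mul, ← Finset.sum_sub_distrib]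
    exact Finset.sum_congr rfl fun i _ => Finset.sum_congr rfl fun j _ => by ring
  have hswap : ∑ i, ∑ j, W i j * (x i ^ 2 - x i * x j) =
      ∑ i, ∑ j, W i j * (x j ^ 2 - x j * x i) := by
    rw [Finset.sum_comm]
    simp_rw [hW.apply]
  rw [hquad, two_mul]
  nth_rewrite 2 [hswap]
  simp_rw [← Finset.sum_add_distrib]
  exact Finset.sum_congr rfl fun i _ => Finset.sum_congr rfl fun j _ => by ring

lemma posSemidef_diagonal_sum_sub [Field R] [LinearOrder R] [IsStrictOrderedRing R] [StarRing R]
    [TrivialStar R] {W : Matrix n n R} (hW : W.IsSymm) (hW0 : ∀ i j, 0 ≤ W i j) :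
    ((diagonal fun i => ∑ j, W i j) - W).PosSemidef := by
  refine .of_dotProduct_mulVec_nonneg ?_ fun x => ?_
  · rw [IsHermitian, conjTranspose_eq_transpose_of_trivial, transpose_sub, diagonal_transpose,
      hW.eq]
  · have hsum : 0 ≤ ∑ i, ∑ j, W i j * (x i - x j) ^ 2 :=
      Finset.sum_nonneg fun i _ => Finset.sum_nonneg fun j _ =>
        mul_nonneg (hW0 i j) (sq_nonneg _)
    rw [star_trivial]
    linarith [dotProduct_mulVec_diagonal_sum_sub hW x]

end Matrix

lemma Multiset.reverse_sort_le {α : Type*} [LinearOrder α] (m : Multiset α) :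
    (m.sort (· ≤ ·)).reverse = m.sort (· ≥ ·) := by
  refine List.Perm.eq_of_sortedGE ?_ ?_ ?_
  · exact List.sortedGE_reverse.mpr (List.sortedLE_iff_pairwise.mpr (m.pairwise_sort _))
  · exact List.sortedGE_iff_pairwise.mpr (m.pairwise_sort _)
  · refine (List.reverse_perm _).trans ?_
    rw [← Multiset.coe_eq_coe, Multiset.sort_eq, Multiset.sort_eq]

section eigDesc
variable {V : Type*} [Fintype V] [DecidableEq V]
open Polynomial
open scoped MatrixOrder

lemma Matrix.IsHermitian.eigDesc_eq_getD_eigenvalues₀ {A : Matrix V V ℝ} (hA : A.IsHermitian)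
    (k : ℕ) : eigDesc A k = (List.ofFn hA.eigenvalues₀).getD (k - 1) 0 := by
  rw [eigDesc, ← hA.sort_roots_charpoly_eq_eigenvalues₀, Multiset.reverse_sort_le]
  simp [RCLike.re_to_real]

lemma eigDesc_le_eigDesc_of_le {A B : Matrix V V ℝ} (hA : A.IsHermitian) (hB : B.IsHermitian)
    (hAB : A ≤ B) (k : ℕ) : eigDesc A k ≤ eigDesc B k := by
  rw [hA.eigDesc_eq_getD_eigenvalues₀, hB.eigDesc_eq_getD_eigenvalues₀]
  rcases lt_or_ge (k - 1) (Fintype.card V) with hk | hk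
  · simpa [List.getD_eq_getElem, hk] using
      hA.eigenvalues₀_le_eigenvalues₀_of_le hB hAB ⟨k - 1, hk⟩
  · simp [hk] -- both indices are past the end of the lists, so both sides are `0`

lemma eigDesc_diagonal (d : V → ℝ) (k : ℕ) :
    eigDesc (Matrix.diagonal d) k =
      (((Finset.univ.val.map d).sort (· ≤ ·)).reverse).getD (k - 1) 0 := by
  have hroots := roots_multiset_prod_X_sub_C (Finset.univ.val.map d)
  rw [Multiset.map_map] at hroots
  rw [eigDesc, charpoly_diagonal, Finset.prod_eq_multiset_prod, ← hroots]
  rfl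

end eigDesc

section ReciprocalDistance
variable {V : Type*} [Fintype V] [DecidableEq V] (G : SimpleGraph V)
open scoped MatrixOrder

lemma RDmat_isSymm : (RDmat G).IsSymm := by
  refine Matrix.IsSymm.ext fun i j => ?_
  by_cases h : i = j
  · simp [RDmat, h]
  · simp [RDmat, h, Ne.symm h, SimpleGraph.dist_comm]

lemma isHermitian_RDmat : (RDmat G).IsHermitian :=
  Matrix.isHermitian_iff_isSymm.mpr (RDmat_isSymm G)

lemma isHermitian_RDalpha (α : ℝ) : (RDalpha G α).IsHermitian :=
  ((Matrix.isHermitian_diagonal _).smul (.all α)).add ((isHermitian_RDmat G).smul (.all _))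

lemma RTr_eq_sum_RDmat (i : V) : RTr G i = ∑ j, RDmat G i j := by
  rw [RTr, ← Finset.sum_erase _ (show RDmat G i i = 0 by simp [RDmat])]
  refine Finset.sum_congr rfl fun j hj => ?_
  simp [RDmat, (Finset.ne_of_mem_erase hj).symm, SimpleGraph.dist_comm]

lemma posSemidef_diagonal_RTr_sub_RDmat : (Matrix.diagonal (RTr G) - RDmat G).PosSemidef := by
  rw [funext (RTr_eq_sum_RDmat G)]
  refine Matrix.posSemidef_diagonal_sum_sub (RDmat_isSymm G) fun i j => ?_
  by_cases h : i = j <;> simp [RDmat, h]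

lemma RDmat_le_RDalpha {α : ℝ} (hα : 0 ≤ α) : RDmat G ≤ RDalpha G α := by
  rw [Matrix.le_iff, show RDalpha G α - RDmat G = α • (Matrix.diagonal (RTr G) - RDmat G) by
    unfold RDalpha; module]
  exact (posSemidef_diagonal_RTr_sub_RDmat G).smul hα

lemma RDalpha_le_diagonal_RTr {α : ℝ} (hα : α ≤ 1) :
    RDalpha G α ≤ Matrix.diagonal (RTr G) := by
  rw [Matrix.le_iff, show Matrix.diagonal (RTr G) - RDalpha G α =
    (1 - α) • (Matrix.diagonal (RTr G) - RDmat G) by unfold RDalpha; module]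
  exact (posSemidef_diagonal_RTr_sub_RDmat G).smul (sub_nonneg.mpr hα)

end ReciprocalDistance

theorem stmt9_general {V : Type*} [Fintype V] [DecidableEq V] (G : SimpleGraph V)
    (α : ℝ) (hα : α ∈ Set.Icc (0 : ℝ) 1)
    (k : ℕ) :
    eigDesc (RDmat G) k ≤ eigDesc (RDalpha G α) k ∧
    eigDesc (RDalpha G α) k ≤
      (((Finset.univ.val.map (RTr G)).sort (· ≤ ·)).reverse).getD (k - 1) 0 := by
  constructor
  · exact eigDesc_le_eigDesc_of_le (isHermitian_RDmat G) (isHermitian_RDalpha G α)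
      (RDmat_le_RDalpha G hα.1) k
  · rw [← eigDesc_diagonal]
    exact eigDesc_le_eigDesc_of_le (isHermitian_RDalpha G α) (Matrix.isHermitian_diagonal _)
      (RDalpha_le_diagonal_RTr G hα.2) k

/-- Corollary 3.6: `λ_k(RD(G)) ≤ λ_k(RD_α(G)) ≤ RTr_k`, where `RTr_k` is the `k`-th largest
reciprocal transmission of `G`. -/
theorem stmt9 {V : Type*} [Fintype V] [DecidableEq V] (G : SimpleGraph V) (hG : G.Connected)
    (α : ℝ) (hα : α ∈ Set.Icc (0 : ℝ) 1)
    (k : ℕ) (hk1 : 1 ≤ k) (hkn : k ≤ Fintype.card V) :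
    eigDesc (RDmat G) k ≤ eigDesc (RDalpha G α) k ∧
    eigDesc (RDalpha G α) k ≤
      (((Finset.univ.val.map (RTr G)).sort (· ≤ ·)).reverse).getD (k - 1) 0 :=
  stmt9_general G α hα k
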